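/- Let N, K, n be natural numbers with K ≤ N and 1 ≤ n ≤ N, let p = (K : ℝ)/(N : ℝ), and let ε > 0 be a real number. Then ∑_{t = 0}^{n} [ if (t : ℝ) ≥ (p + ε)·n then (K choose t) · ((N − K) choose (n − t)) else 0 ] ≤ exp(−2·ε²·n) · (N choose n), where (· choose ·) denotes the binomial coefficient and exp is the real exponential. -/

import Mathlib

/-!
Chernoff's method with parameter `λ = 4ε`: the tail is at most `e^{-λ(p+ε)n} E[e^{λX}]`.
The moment generating function of the hypergeometric law is dominated by the binomial one,
`E[y^X] ≤ (1 - p + p y)^n` for `y ≥ 1`: expanding `y^X = ∑ⱼ (y-1)^j C(X,j)` reduces this to the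
factorial moments, and Vandermonde's identity gives
`E[C(X,j)] = C(K,j) C(N-j,n-j) / C(N,n) ≤ p^j C(n,j)`, the binomial factorial moment.
Hoeffding's lemma for a Bernoulli variable, `1 - p + p e^λ ≤ e^{pλ + λ²/8}`, finishes the bound.
-/

open Real Finset MeasureTheory ProbabilityTheory

theorem Nat.sum_choose_mul_choose_mul_choose (K M n j : ℕ) (hjn : j ≤ n) :
    ∑ t ∈ range (n + 1), K.choose t * M.choose (n - t) * t.choose j =
      K.choose j * (K + M - j).choose (n - j) := by
  obtain hKj | hjK := lt_or_ge K j
  · rw [choose_eq_zero_of_lt hKj, zero_mul]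
    refine sum_eq_zero fun t _ => ?_
    obtain htj | hjt := lt_or_ge t j
    · rw [choose_eq_zero_of_lt htj, mul_zero]
    · rw [choose_eq_zero_of_lt (hKj.trans_le hjt), zero_mul, zero_mul]
  have hlow : ∑ t ∈ range j, K.choose t * M.choose (n - t) * t.choose j = 0 :=
    sum_eq_zero fun t ht => by rw [choose_eq_zero_of_lt (mem_range.1 ht), mul_zero]
  rw [range_eq_Ico, ← sum_Ico_consecutive _ (zero_le j) (by omega : j ≤ n + 1), ← range_eq_Ico,
    hlow, zero_add, sum_Ico_eq_sum_range, show n + 1 - j = n - j + 1 by omega]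
  calc ∑ i ∈ range (n - j + 1), K.choose (j + i) * M.choose (n - (j + i)) * (j + i).choose j
      = ∑ i ∈ range (n - j + 1), K.choose j * ((K - j).choose i * M.choose (n - j - i)) := by
        refine sum_congr rfl fun i _ => ?_
        rw [mul_right_comm, choose_mul (le_add_right j i), add_tsub_cancel_left,
          show n - (j + i) = n - j - i by omega]
        ring
    _ = K.choose j * (K + M - j).choose (n - j) := by
        rw [← mul_sum, ← Finset.Nat.sum_antidiagonal_eq_sum_range_succ
          (fun a b => (K - j).choose a * M.choose b), ← add_choose_eq,
          show K - j + M = K + M - j by omega]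

theorem Nat.choose_mul_pow_le_pow_mul_choose {K N : ℕ} (hKN : K ≤ N) (j : ℕ) :
    K.choose j * N ^ j ≤ K ^ j * N.choose j := by
  have hdesc : K.descFactorial j * N ^ j ≤ K ^ j * N.descFactorial j := by
    induction j with
    | zero => simp
    | succ j ih =>
      have hstep : (K - j) * N ≤ K * (N - j) := by
        rw [Nat.sub_mul, Nat.mul_sub]
        exact Nat.sub_le_sub_left (by rw [mul_comm K j]; exact Nat.mul_le_mul_left j hKN) _
      calc K.descFactorial (j + 1) * N ^ (j + 1)
          = ((K - j) * N) * (K.descFactorial j * N ^ j) := by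
            rw [descFactorial_succ, pow_succ]; ring
        _ ≤ (K * (N - j)) * (K ^ j * N.descFactorial j) := Nat.mul_le_mul hstep ih
        _ = K ^ (j + 1) * N.descFactorial (j + 1) := by rw [descFactorial_succ, pow_succ]; ring
  rw [descFactorial_eq_factorial_mul_choose, descFactorial_eq_factorial_mul_choose] at hdesc
  refine Nat.le_of_mul_le_mul_left ?_ j.factorial_pos
  calc j.factorial * (K.choose j * N ^ j) = j.factorial * K.choose j * N ^ j := by ring
    _ ≤ K ^ j * (j.factorial * N.choose j) := hdesc
    _ = j.factorial * (K ^ j * N.choose j) := by ring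

theorem Nat.cast_choose_le_div_pow_mul_choose {K N : ℕ} (hKN : K ≤ N) (j : ℕ) :
    (K.choose j : ℝ) ≤ ((K : ℝ) / N) ^ j * N.choose j := by
  obtain rfl | hN := N.eq_zero_or_pos
  · obtain rfl : K = 0 := by omega
    cases j <;> simp
  rw [div_pow, div_mul_eq_mul_div, le_div_iff₀ (by positivity)]
  exact_mod_cast choose_mul_pow_le_pow_mul_choose hKN j

theorem add_one_pow_eq_sum_range_mul_choose {R : Type*} [CommSemiring R] (x : R) {t n : ℕ}
    (htn : t ≤ n) : (x + 1) ^ t = ∑ j ∈ range (n + 1), x ^ j * t.choose j := by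
  rw [add_pow]
  refine sum_subset (range_subset_range.2 (by omega)) (fun j _ hj => ?_) |>.trans
    (sum_congr rfl fun j _ => by rw [one_pow, mul_one])
  rw [Nat.choose_eq_zero_of_lt (by simpa using hj), Nat.cast_zero, mul_zero]

theorem sum_choose_mul_choose_mul_pow_le {K N : ℕ} (hKN : K ≤ N) (n : ℕ) {y : ℝ} (hy : 1 ≤ y) :
    ∑ t ∈ range (n + 1), ((K.choose t * (N - K).choose (n - t) : ℕ) : ℝ) * y ^ t ≤
      N.choose n * (1 - K / N + K / N * y) ^ n := by
  set p : ℝ := K / N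
  obtain ⟨x, hx, rfl⟩ : ∃ x : ℝ, 0 ≤ x ∧ y = x + 1 := ⟨y - 1, by linarith, by ring⟩
  calc ∑ t ∈ range (n + 1), ((K.choose t * (N - K).choose (n - t) : ℕ) : ℝ) * (x + 1) ^ t
      = ∑ j ∈ range (n + 1), x ^ j *
          ((∑ t ∈ range (n + 1), K.choose t * (N - K).choose (n - t) * t.choose j : ℕ) : ℝ) := by
        simp_rw [Nat.cast_sum, mul_sum]
        rw [sum_comm]
        refine sum_congr rfl fun t ht => ?_
        rw [add_one_pow_eq_sum_range_mul_choose x (mem_range_succ_iff.1 ht), mul_sum]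
        refine sum_congr rfl fun j _ => ?_
        push_cast
        ring
    _ = ∑ j ∈ range (n + 1), x ^ j * ((K.choose j : ℝ) * (N - j).choose (n - j)) := by
        refine sum_congr rfl fun j hj => ?_
        rw [Nat.sum_choose_mul_choose_mul_choose _ _ _ _ (mem_range_succ_iff.1 hj),
          show K + (N - K) - j = N - j by omega]
        push_cast
        ring
    _ ≤ ∑ j ∈ range (n + 1), x ^ j * (p ^ j * N.choose j * (N - j).choose (n - j)) := by
        gcongr
        exact Nat.cast_choose_le_div_pow_mul_choose hKN _
    _ = N.choose n * ∑ j ∈ range (n + 1), (p * x) ^ j * n.choose j := by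
        rw [mul_sum]
        refine sum_congr rfl fun j hj => ?_
        have := Nat.choose_mul (n := N) (mem_range_succ_iff.1 hj)
        rw [mul_pow, mul_assoc (p ^ j), ← Nat.cast_mul, ← this]
        push_cast
        ring
    _ = N.choose n * (1 - p + p * (x + 1)) ^ n := by
        rw [← add_one_pow_eq_sum_range_mul_choose _ le_rfl]
        ring

theorem sum_ite_le_exp_neg_mul_sum_mul_exp {ι : Type*} (s : Finset ι) (f w : ι → ℝ)
    (hw : ∀ i ∈ s, 0 ≤ w i) (a : ℝ) {l : ℝ} (hl : 0 ≤ l) :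
    ∑ i ∈ s, (if a ≤ f i then w i else 0) ≤ exp (-l * a) * ∑ i ∈ s, w i * exp (l * f i) := by
  rw [mul_sum]
  refine sum_le_sum fun i hi => ?_
  rw [mul_left_comm, ← exp_add]
  split_ifs with ha
  · exact le_mul_of_one_le_right (hw i hi) (one_le_exp (by nlinarith))
  · exact mul_nonneg (hw i hi) (exp_pos _).le

theorem one_sub_add_mul_exp_le {p : ℝ} (hp₀ : 0 ≤ p) (hp₁ : p ≤ 1) (t : ℝ) :
    1 - p + p * exp t ≤ exp (p * t + t ^ 2 / 8) := by
  set μ : Measure Bool := Ber(true, false, ⟨p, hp₀, hp₁⟩)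
  set X : Bool → ℝ := fun b => if b then 1 else 0
  have hmean : μ[X] = p := by simp [μ, X, integral_bernoulliMeasure]
  have hoeffding := (hasSubgaussianMGF_of_mem_Icc (μ := μ) (X := X) (a := 0) (b := 1)
    (by fun_prop) (ae_of_all _ fun b => by cases b <;> simp [X])).mgf_le t
  norm_num [mgf, μ, integral_bernoulliMeasure, hmean, X] at hoeffding
  calc 1 - p + p * exp t
      = exp (t * p) * (p * exp (t * (1 - p)) + (1 - p) * exp (-(t * p))) := by
        rw [show t * (1 - p) = t + -(t * p) by ring, exp_add, exp_neg]
        field_simp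
        ring
    _ ≤ exp (t * p) * exp (t ^ 2 / 8) := by
        gcongr
        exact hoeffding.trans_eq (by ring_nf)
    _ = exp (p * t + t ^ 2 / 8) := by rw [← exp_add, mul_comm t p]

theorem hypergeometric_tail_bound_general
    (N K n : ℕ) (hKN : K ≤ N)
    (ε : ℝ) (hε : 0 < ε) :
    ∑ t ∈ Finset.range (n + 1),
      (if ((K : ℝ) / (N : ℝ) + ε) * (n : ℝ) ≤ (t : ℝ) then
        ((Nat.choose K t * Nat.choose (N - K) (n - t) : ℕ) : ℝ)
      else 0) ≤
      Real.exp (-2 * ε ^ 2 * (n : ℝ)) * (Nat.choose N n : ℝ) := by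
  set p : ℝ := K / N
  have hp₁ : p ≤ 1 := div_le_one_of_le₀ (by exact_mod_cast hKN) N.cast_nonneg
  have hp₀ : 0 ≤ p := by positivity
  calc _ ≤ exp (-(4 * ε) * ((p + ε) * n)) * ∑ t ∈ range (n + 1),
          ((K.choose t * (N - K).choose (n - t) : ℕ) : ℝ) * exp (4 * ε * t) :=
        sum_ite_le_exp_neg_mul_sum_mul_exp _ _ _ (fun _ _ => Nat.cast_nonneg _) _ (by positivity)
    _ ≤ exp (-(4 * ε) * ((p + ε) * n)) * (N.choose n * (1 - p + p * exp (4 * ε)) ^ n) := by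
        simp only [mul_comm (4 * ε), exp_nat_mul]
        gcongr
        exact sum_choose_mul_choose_mul_pow_le hKN n (one_le_exp (by positivity))
    _ ≤ exp (-(4 * ε) * ((p + ε) * n)) *
          (N.choose n * exp (p * (4 * ε) + (4 * ε) ^ 2 / 8) ^ n) := by
        gcongr
        exact one_sub_add_mul_exp_le hp₀ hp₁ _
    _ = exp (-2 * ε ^ 2 * n) * N.choose n := by
        rw [← exp_nat_mul, mul_left_comm, ← exp_add]
        ring_nf

/-- Hypergeometric tail bound (Lemma D.7 of Foster et al.): if `X`
counts successes in `n` draws without replacement from a population of size `N`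
with `K` successes, then `ℙ[X ≥ (p + ε) n] ≤ exp(−2ε²n)` with `p = K/N`, stated
combinatorially. -/
theorem hypergeometric_tail_bound
    (N K n : ℕ) (hKN : K ≤ N) (hn1 : 1 ≤ n) (hnN : n ≤ N)
    (ε : ℝ) (hε : 0 < ε) :
    ∑ t ∈ Finset.range (n + 1),
      (if ((K : ℝ) / (N : ℝ) + ε) * (n : ℝ) ≤ (t : ℝ) then
        ((Nat.choose K t * Nat.choose (N - K) (n - t) : ℕ) : ℝ)
      else 0) ≤
      Real.exp (-2 * ε ^ 2 * (n : ℝ)) * (Nat.choose N n : ℝ) :=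
  hypergeometric_tail_bound_general N K n hKN ε hε
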